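/- Let ũ ∈ tder_n. Then ũ ∈ krv_n^0 if and only if both of the following hold: (a) ρ(ũ)(η_gr(a,b)) = η_gr(ρ(ũ)(a), b) + η_gr(a, ρ(ũ)(b)) for all a, b ∈ ass_n; and (b) ρ(ũ) ∘ μ_gr = μ_gr ∘ ρ(ũ) as maps ass_n → ass_n. -/

import Mathlib

noncomputable section

open scoped TensorProduct

attribute [local instance 100] LieRing.ofAssociativeRing

/-- The free unital associative algebra over `ℚ` on `N` generators. -/
abbrev Ass (N : ℕ) : Type := FreeAlgebra ℚ (Fin N)

/-- The `i`-th generator `x_i`. -/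
def gen {N : ℕ} (i : Fin N) : Ass N := FreeAlgebra.ι ℚ i

/-- The monomial (word) associated to a list of generator indices. -/
def wordProd {N : ℕ} (l : List (Fin N)) : Ass N := (l.map gen).prod

/-- Extend a function on words (monomials) to a `ℚ`-linear map on the free algebra,
using the monomial basis. -/
def liftWord {N : ℕ} {A : Type} [AddCommGroup A] [Module ℚ A]
    (f : List (Fin N) → A) : Ass N →ₗ[ℚ] A :=
  (FreeAlgebra.basisFreeMonoid ℚ (Fin N)).constr ℚ fun w => f w.toList

/-- `μ_gr` on a word. -/
def muWord {N : ℕ} : List (Fin N) → Ass N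
  | [] => 0
  | [_] => 0
  | a :: b :: t => (if a = b then -(wordProd (a :: t)) else 0) + gen a * muWord (b :: t)

/-- The linearized self-intersection operation `μ_gr`. -/
def muGr (N : ℕ) : Ass N →ₗ[ℚ] Ass N := liftWord muWord

/-- The antipode: the anti-automorphism `ι` with `ι(x_i) = -x_i`, as a linear map. -/
def iotaMap (N : ℕ) : Ass N →ₗ[ℚ] Ass N :=
  liftWord fun l => ((-1 : ℚ) ^ l.length) • wordProd l.reverse

/-- The (right) partial derivative `∂_i`, characterized on `lie_N` by
`a = Σ_i (∂_i a) x_i`. -/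
def partialD {N : ℕ} (i : Fin N) : Ass N →ₗ[ℚ] Ass N :=
  liftWord fun l =>
    match l.getLast? with
    | some a => if a = i then wordProd l.dropLast else 0
    | none => 0

/-- `η_gr` on a pair of words. -/
def etaWord {N : ℕ} (l r : List (Fin N)) : Ass N :=
  match l.getLast?, r with
  | some a, b :: t => if a = b then -(wordProd (l.dropLast ++ a :: t)) else 0
  | _, _ => 0

/-- The linearized homotopy intersection form `η_gr`. -/
def etaGr (N : ℕ) : Ass N →ₗ[ℚ] Ass N →ₗ[ℚ] Ass N :=
  liftWord fun l => liftWord fun r => etaWord l r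

/-- Degree-`k` homogeneous part of a free algebra (word-length grading). -/
def homogS (X : Type) (k : ℕ) : Submodule ℚ (FreeAlgebra ℚ X) :=
  Submodule.span ℚ {z | ∃ l : List X, l.length = k ∧ z = (l.map (FreeAlgebra.ι ℚ)).prod}

/-- The projection onto the degree-`k` homogeneous component. -/
def homogComp {N : ℕ} (k : ℕ) : Ass N →ₗ[ℚ] Ass N :=
  liftWord fun l => if l.length = k then wordProd l else 0

/-- The free Lie algebra on `x_1, …, x_N`, as the Lie subalgebra of `Ass N`
(with the commutator bracket) generated by the generators. -/
def lieN (N : ℕ) : LieSubalgebra ℚ (Ass N) :=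
  LieSubalgebra.lieSpan ℚ (Ass N) (Set.range (gen (N := N)))

/-- The generator `x_i` as an element of `lie_N`. -/
def genL (N : ℕ) (i : Fin N) : lieN N :=
  ⟨gen i, LieSubalgebra.subset_lieSpan ⟨i, rfl⟩⟩

/-- Substitution: the algebra endomorphism of `ass_2` with `x ↦ p`, `y ↦ q`. -/
def sub2 (p q : Ass 2) : Ass 2 →ₐ[ℚ] Ass 2 := FreeAlgebra.lift ℚ ![p, q]

/-- `x`. -/
def xA : Ass 2 := gen 0
/-- `y`. -/
def yA : Ass 2 := gen 1

/-- Equation (E1): `φ(y,0) − φ(x+y,0) = 0`. -/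
def E1 (φ : Ass 2) : Prop := sub2 yA 0 φ - sub2 (xA + yA) 0 φ = 0

/-- Equation (E2): `(∂_y φ) + (∂_y φ)(y,0) − (∂_y φ)(x+y,0) − R(φ) = 0`,
where `R` is the restriction of `μ_gr` to `lie_2`. -/
def E2 (φ : Ass 2) : Prop :=
  partialD 1 φ + sub2 yA 0 (partialD 1 φ) - sub2 (xA + yA) 0 (partialD 1 φ) - muGr 2 φ = 0

/-- Equation (E3): `[x, φ(y,x)] + [y, φ(x,y)] = 0`. -/
def E3 (φ : Ass 2) : Prop := ⁅xA, sub2 yA xA φ⁆ + ⁅yA, φ⁆ = 0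

/-- `ν^em(φ) = (φ(y,x), φ(x,y))`. -/
def nuEm (φ : Ass 2) : Fin 2 → Ass 2 := ![sub2 yA xA φ, φ]

/-- The space `grt_1^em` of solutions to the linearized emergent equations. -/
def grt1em : Set (Ass 2) := {φ | φ ∈ lieN 2 ∧ E1 φ ∧ E2 φ ∧ E3 φ}

/-- The derivation `ρ(ũ)` on a word. -/
def rhoWord {N : ℕ} (u : Fin N → Ass N) : List (Fin N) → Ass N
  | [] => 0
  | a :: t => ⁅gen a, u a⁆ * wordProd t + gen a * rhoWord u t

/-- The tangential derivation `ρ(ũ)`, determined by `ρ(ũ)(x_i) = [x_i, u_i]`. -/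
def rho {N : ℕ} (u : Fin N → Ass N) : Ass N →ₗ[ℚ] Ass N := liftWord (rhoWord u)

/-- The span of commutators in `ass_N`. -/
def trRel (N : ℕ) : Submodule ℚ (Ass N) :=
  Submodule.span ℚ {z | ∃ a b : Ass N, z = a * b - b * a}

/-- The trace space `tr_N = ass_N/[ass_N, ass_N]`. -/
abbrev Tr (N : ℕ) : Type := Ass N ⧸ trRel N

/-- The projection `|·| : ass_N → tr_N`. -/
def trM (N : ℕ) : Ass N →ₗ[ℚ] Tr N := (trRel N).mkQ

/-- The divergence `div(ũ) = Σ_i |x_i (∂_i u_i)|`. -/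
def divergence {N : ℕ} (u : Fin N → Ass N) : Tr N :=
  ∑ i, trM N (gen i * partialD i (u i))

/-- `ũ ∈ tder_N`: all components lie in `lie_N`. -/
def IsTDer {N : ℕ} (u : Fin N → Ass N) : Prop := ∀ i, u i ∈ lieN N

/-- `ũ ∈ sder_N`. -/
def IsSDer {N : ℕ} (u : Fin N → Ass N) : Prop := IsTDer u ∧ rho u (∑ i, gen i) = 0

/-- `ũ ∈ krv_N`. -/
def IsKRV {N : ℕ} (u : Fin N → Ass N) : Prop :=
  IsSDer u ∧ ∃ f : Fin (N + 1) → Polynomial ℚ,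
    divergence u =
      trM N (Polynomial.aeval (∑ i, gen i) (f 0)) +
        ∑ i : Fin N, trM N (Polynomial.aeval (gen i) (f i.succ))

/-- `ũ ∈ krv_N^0`. -/
def IsKRV0 {N : ℕ} (u : Fin N → Ass N) : Prop :=
  IsSDer u ∧ ∃ cf : Fin N → ℚ, divergence u = ∑ i, cf i • trM N (gen i)

/-- The swap `u(x,y) ↦ u(y,x)`. -/
def swapA : Ass 2 →ₐ[ℚ] Ass 2 := sub2 yA xA

/-- `ũ ∈ krv_2^sym`. -/
def IsKRVsym (u : Fin 2 → Ass 2) : Prop := IsKRV u ∧ u 1 = swapA (u 0)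

/-- The coproduct `Δ` on `ass_N`, with `Δ(x_i) = x_i ⊗ 1 + 1 ⊗ x_i`. -/
def comulA (N : ℕ) : Ass N →ₐ[ℚ] (Ass N ⊗[ℚ] Ass N) :=
  FreeAlgebra.lift ℚ fun i => gen i ⊗ₜ[ℚ] (1 : Ass N) + (1 : Ass N) ⊗ₜ[ℚ] gen i

/-- `μ_{r,gr} = ((|·|∘mult) ⊗ id) ∘ (id ⊗ ((ι ⊗ id) ∘ Δ)) ∘ (id ⊗ μ_gr) ∘ Δ`. -/
def muR (N : ℕ) : Ass N →ₗ[ℚ] Tr N ⊗[ℚ] Ass N :=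
  (TensorProduct.map ((trM N).comp (LinearMap.mul' ℚ (Ass N))) LinearMap.id).comp <|
    ((TensorProduct.assoc ℚ (Ass N) (Ass N) (Ass N)).symm.toLinearMap).comp <|
      (TensorProduct.map LinearMap.id
          ((TensorProduct.map (iotaMap N) LinearMap.id).comp (comulA N).toLinearMap)).comp <|
        (TensorProduct.map LinearMap.id (muGr N)).comp (comulA N).toLinearMap

/-- `Alt(a ⊗ b) = a ⊗ b - b ⊗ a`. -/
def altMap (N : ℕ) : Tr N ⊗[ℚ] Tr N →ₗ[ℚ] Tr N ⊗[ℚ] Tr N :=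
  LinearMap.id - (TensorProduct.comm ℚ (Tr N) (Tr N)).toLinearMap

/-- The linearized Turaev cobracket `δ_gr = Alt ∘ (id ⊗ |·|) ∘ μ_{r,gr}`. -/
def Dgr (N : ℕ) : Ass N →ₗ[ℚ] Tr N ⊗[ℚ] Tr N :=
  (altMap N).comp ((TensorProduct.map LinearMap.id (trM N)).comp (muR N))

/-- Index type of the generators `t_{pq}` (`p ≠ q`) of the Drinfeld–Kohno Lie algebra. -/
def dkGenIdx (N : ℕ) : Type := {pq : Fin N × Fin N // pq.1 ≠ pq.2}

abbrev FLdk (N : ℕ) := FreeLieAlgebra ℚ (dkGenIdx N)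

def tFree {N : ℕ} (p q : Fin N) (h : p ≠ q) : FLdk N := FreeLieAlgebra.of ℚ ⟨(p, q), h⟩

/-- The defining relations of `dk_N`: symmetry, commutation and 4T. -/
def dkRels (N : ℕ) : Set (FLdk N) :=
  {z | ∃ (p q : Fin N) (h : p ≠ q), z = tFree p q h - tFree q p h.symm} ∪
  {z | ∃ (p q r s : Fin N) (hpq : p ≠ q) (hrs : r ≠ s),
      p ≠ r ∧ p ≠ s ∧ q ≠ r ∧ q ≠ s ∧ z = ⁅tFree p q hpq, tFree r s hrs⁆} ∪
  {z | ∃ (p q r : Fin N) (hpq : p ≠ q) (hqr : q ≠ r) (hpr : p ≠ r),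
      z = ⁅tFree p q hpq + tFree q r hqr, tFree p r hpr⁆}

def dkIdeal (N : ℕ) : LieIdeal ℚ (FLdk N) := LieSubmodule.lieSpan ℚ (FLdk N) (dkRels N)

/-- The Drinfeld–Kohno Lie algebra `dk_N`. -/
abbrev dk (N : ℕ) := FLdk N ⧸ dkIdeal N

/-- The generator `t_{pq}` of `dk_N`. -/
def tGen {N : ℕ} (p q : Fin N) (h : p ≠ q) : dk N :=
  LieSubmodule.Quotient.mk (N := dkIdeal N) (tFree p q h)

/-- Index type of the generators of the mixed Drinfeld–Kohno Lie algebra `dk_{m,n}`: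
pairs of distinct indices in `Fin (m+n)`, not both poles (i.e., not both `< m`). -/
def MIdx (m n : ℕ) : Type :=
  {pq : Fin (m + n) × Fin (m + n) // pq.1 ≠ pq.2 ∧ (m ≤ (pq.1 : ℕ) ∨ m ≤ (pq.2 : ℕ))}

abbrev FLmix (m n : ℕ) := FreeLieAlgebra ℚ (MIdx m n)

def tMix {m n : ℕ} (p q : Fin (m + n)) (h : p ≠ q)
    (hm : m ≤ (p : ℕ) ∨ m ≤ (q : ℕ)) : FLmix m n :=
  FreeLieAlgebra.of ℚ ⟨(p, q), h, hm⟩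

/-- The defining relations of `dk_{m,n}`: exactly the symmetry, commutation and 4T relations
of `dk_{m+n}` involving only mixed pairs. -/
def mixRels (m n : ℕ) : Set (FLmix m n) :=
  {z | ∃ (p q : Fin (m + n)) (h : p ≠ q) (hm : m ≤ (p : ℕ) ∨ m ≤ (q : ℕ)),
      z = tMix p q h hm - tMix q p h.symm hm.symm} ∪
  {z | ∃ (p q r s : Fin (m + n)) (hpq : p ≠ q) (hmpq : m ≤ (p : ℕ) ∨ m ≤ (q : ℕ))
      (hrs : r ≠ s) (hmrs : m ≤ (r : ℕ) ∨ m ≤ (s : ℕ)),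
      p ≠ r ∧ p ≠ s ∧ q ≠ r ∧ q ≠ s ∧ z = ⁅tMix p q hpq hmpq, tMix r s hrs hmrs⁆} ∪
  {z | ∃ (p q r : Fin (m + n)) (hpq : p ≠ q) (hmpq : m ≤ (p : ℕ) ∨ m ≤ (q : ℕ))
      (hqr : q ≠ r) (hmqr : m ≤ (q : ℕ) ∨ m ≤ (r : ℕ))
      (hpr : p ≠ r) (hmpr : m ≤ (p : ℕ) ∨ m ≤ (r : ℕ)),
      z = ⁅tMix p q hpq hmpq + tMix q r hqr hmqr, tMix p r hpr hmpr⁆}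

def mixIdeal (m n : ℕ) : LieIdeal ℚ (FLmix m n) :=
  LieSubmodule.lieSpan ℚ (FLmix m n) (mixRels m n)

/-- The mixed Drinfeld–Kohno Lie algebra `dk_{m,n}`. -/
abbrev dkmn (m n : ℕ) := FLmix m n ⧸ mixIdeal m n

lemma castAdd_ne_natAdd {m n : ℕ} (i : Fin m) (j : Fin n) :
    Fin.castAdd n i ≠ Fin.natAdd m j := by
  intro h
  have hv := congrArg Fin.val h
  simp only [Fin.coe_castAdd, Fin.coe_natAdd] at hv
  have := i.isLt
  omega

lemma natAdd_ne {m n : ℕ} {u v : Fin n} (h : u ≠ v) :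
    Fin.natAdd m u ≠ Fin.natAdd m v := by
  intro hh
  exact h (by
    have hv := congrArg Fin.val hh
    simp only [Fin.coe_natAdd] at hv
    exact Fin.ext (by omega))

lemma natAdd_le_left (m : ℕ) {n : ℕ} (j : Fin n) : m ≤ (Fin.natAdd m j : ℕ) := by
  simp only [Fin.coe_natAdd]; omega

/-- The generator `a_{ij}` of `dk_{m,n}` (0-indexed): `a_{ij} = t_{i(m+j)}`. -/
def aG {m n : ℕ} (i : Fin m) (j : Fin n) : dkmn m n :=
  LieSubmodule.Quotient.mk (N := mixIdeal m n)
    (tMix (Fin.castAdd n i) (Fin.natAdd m j) (castAdd_ne_natAdd i j)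
      (Or.inr (natAdd_le_left m j)))

/-- The generator `c_{ij}` of `dk_{m,n}` (0-indexed): `c_{ij} = t_{(m+i)(m+j)}`. -/
def cG {m n : ℕ} (u v : Fin n) (h : u ≠ v) : dkmn m n :=
  LieSubmodule.Quotient.mk (N := mixIdeal m n)
    (tMix (Fin.natAdd m u) (Fin.natAdd m v) (natAdd_ne h)
      (Or.inl (natAdd_le_left m u)))

/-- The Lie ideal `c` of `dk_{m,n}` generated by the `c_{ij}`. -/
def cId (m n : ℕ) : LieIdeal ℚ (dkmn m n) :=
  LieSubmodule.lieSpan ℚ (dkmn m n) {z | ∃ (u v : Fin n) (h : u ≠ v), z = cG u v h}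

/-- The Lie ideal `[c,c]`. -/
def ccId (m n : ℕ) : LieIdeal ℚ (dkmn m n) := ⁅cId m n, cId m n⁆

/-- The emergent Drinfeld–Kohno Lie algebra `edk_{m,n} = dk_{m,n}/[c,c]`. -/
abbrev edk (m n : ℕ) := dkmn m n ⧸ ccId m n

/-- Projection `dk_{m,n} → edk_{m,n}` as a function. -/
def eprojF (m n : ℕ) : dkmn m n → edk m n := LieSubmodule.Quotient.mk (N := ccId m n)

/-- Projection `dk_{m,n} → edk_{m,n}` as a `ℚ`-linear map. -/
def eproj (m n : ℕ) : dkmn m n →ₗ[ℚ] edk m n := (ccId m n).toSubmodule.mkQ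

/-- `a_{ij}` in `edk_{m,n}`. -/
def aGE {m n : ℕ} (i : Fin m) (j : Fin n) : edk m n := eprojF m n (aG i j)

/-- `c_{ij}` in `edk_{m,n}`. -/
def cGE {m n : ℕ} (u v : Fin n) (h : u ≠ v) : edk m n := eprojF m n (cG u v h)

/-- The canonical Lie algebra map `FreeLieAlgebra ℚ (Fin m) → ass_m`,
whose image is `lie_m`. -/
def toAssL (m : ℕ) : FreeLieAlgebra ℚ (Fin m) →ₗ⁅ℚ⁆ FreeAlgebra ℚ (Fin m) :=
  FreeLieAlgebra.lift ℚ (FreeAlgebra.ι ℚ)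

/-- `u ↦ u_i` (at `dk` level): the Lie algebra map with `x_p ↦ a_{pi}`. -/
def uEldk {m n : ℕ} (i : Fin n) : FreeLieAlgebra ℚ (Fin m) →ₗ⁅ℚ⁆ dkmn m n :=
  FreeLieAlgebra.lift ℚ fun p => aG p i

/-- `u ↦ u_i`: the Lie algebra map `lie_m → edk_{m,n}` with `x_p ↦ a_{pi}`. -/
def uEl {m n : ℕ} (i : Fin n) : FreeLieAlgebra ℚ (Fin m) →ₗ⁅ℚ⁆ edk m n :=
  FreeLieAlgebra.lift ℚ fun p => aGE p i

/-- Iterated bracketing `[a_{p₁ j}, [a_{p₂ j}, [… , [a_{p_d j}, ξ]…]]]`. -/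
def adWApply {m n : ℕ} (j : Fin n) : List (Fin m) → edk m n → edk m n
  | [], ξ => ξ
  | p :: t, ξ => ⁅aGE p j, adWApply j t ξ⁆

/-- `w ↦ w_{uv}`: the linear map `ass_m → edk_{m,n}` with
`1 ↦ c_{uv}` and `(x_{p₁}⋯x_{p_d}) ↦ [a_{p₁ v}, [… [a_{p_d v}, c_{uv}]…]]`. -/
def wEl {m n : ℕ} (u v : Fin n) (h : u ≠ v) : Ass m →ₗ[ℚ] edk m n :=
  liftWord fun l => adWApply v l (cGE u v h)

/-- `ad_w^{(l)}(ξ)`, linear in `w`. -/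
def adOp {m n : ℕ} (l : Fin n) (ξ : edk m n) : Ass m →ₗ[ℚ] edk m n :=
  liftWord fun lst => adWApply l lst ξ

/-- Degree-`k` part of the free Lie algebra (generators of degree 1), realized as the
preimage of the degree-`k` part of the free associative algebra under the canonical map. -/
def flHomog (X : Type) (k : ℕ) : Submodule ℚ (FreeLieAlgebra ℚ X) :=
  Submodule.comap
    (FreeLieAlgebra.lift ℚ (FreeAlgebra.ι ℚ (X := X)) :
      FreeLieAlgebra ℚ X →ₗ⁅ℚ⁆ FreeAlgebra ℚ X).toLinearMap
    (homogS X k)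

/-- Degree-`k` part of `edk_{m,n}`. -/
def edkHomog (m n : ℕ) (k : ℕ) : Submodule ℚ (edk m n) :=
  (((flHomog (MIdx m n) k).map (mixIdeal m n).toSubmodule.mkQ)).map (eproj m n)

-- Fin helper lemmas
lemma castSucc_ne_of_ne {n : ℕ} {u v : Fin n} (h : u ≠ v) :
    Fin.castSucc u ≠ Fin.castSucc v := fun hh => h (Fin.castSucc_injective n hh)

lemma succ_ne_of_ne {n : ℕ} {u v : Fin n} (h : u ≠ v) :
    Fin.succ u ≠ Fin.succ v := fun hh => h (Fin.succ_injective n hh)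

lemma castSucc_ne_last {n : ℕ} (u : Fin n) : Fin.castSucc u ≠ Fin.last n :=
  (Fin.castSucc_lt_last u).ne

lemma castSucc_ne_succ_of_le {n : ℕ} {u v : Fin n} (h : u ≤ v) :
    Fin.castSucc u ≠ Fin.succ v := by
  intro hh
  have hv := congrArg Fin.val hh
  simp only [Fin.coe_castSucc, Fin.val_succ] at hv
  have := Fin.le_def.mp h
  omega

/-- `D` is the pole coface map `δ_k : dk_{m,n} → dk_{m+1,n}`, `0 ≤ k ≤ m`
(1-indexed `k`; `k = 0` is extension on the left). -/
def IsDeltaPole (m n : ℕ) (k : ℕ) (D : dkmn m n →ₗ⁅ℚ⁆ dkmn (m + 1) n) : Prop :=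
  (∀ (i : Fin m) (j : Fin n),
     (((i : ℕ) + 1 < k) → D (aG i j) = aG (Fin.castSucc i) j) ∧
     (((i : ℕ) + 1 = k) → D (aG i j) = aG (Fin.castSucc i) j + aG (Fin.succ i) j) ∧
     ((k < (i : ℕ) + 1) → D (aG i j) = aG (Fin.succ i) j)) ∧
  (∀ (u v : Fin n) (h : u ≠ v), D (cG u v h) = cG u v h)

/-- `D` is the strand coface map `δ_{m+κ} : dk_{m,n} → dk_{m,n+1}`, `1 ≤ κ ≤ n+1`
(1-indexed strand `κ`; `κ = n+1` is extension on the right). -/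
def IsDeltaStrand (m n : ℕ) (κ : ℕ) (D : dkmn m n →ₗ⁅ℚ⁆ dkmn m (n + 1)) : Prop :=
  (∀ (i : Fin m) (j : Fin n),
     (((j : ℕ) + 1 < κ) → D (aG i j) = aG i (Fin.castSucc j)) ∧
     (((j : ℕ) + 1 = κ) → D (aG i j) = aG i (Fin.castSucc j) + aG i (Fin.succ j)) ∧
     ((κ < (j : ℕ) + 1) → D (aG i j) = aG i (Fin.succ j))) ∧
  (∀ (u v : Fin n) (h : u < v),
     (((v : ℕ) + 1 < κ) →
        D (cG u v h.ne) = cG (Fin.castSucc u) (Fin.castSucc v) (castSucc_ne_of_ne h.ne)) ∧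
     (((v : ℕ) + 1 = κ) →
        D (cG u v h.ne) = cG (Fin.castSucc u) (Fin.castSucc v) (castSucc_ne_of_ne h.ne)
          + cG (Fin.castSucc u) (Fin.succ v) (castSucc_ne_succ_of_le h.le)) ∧
     (((u : ℕ) + 1 < κ ∧ κ < (v : ℕ) + 1) →
        D (cG u v h.ne) = cG (Fin.castSucc u) (Fin.succ v) (castSucc_ne_succ_of_le h.le)) ∧
     (((u : ℕ) + 1 = κ) →
        D (cG u v h.ne) = cG (Fin.castSucc u) (Fin.succ v) (castSucc_ne_succ_of_le h.le)
          + cG (Fin.succ u) (Fin.succ v) (succ_ne_of_ne h.ne)) ∧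
     ((κ < (u : ℕ) + 1) →
        D (cG u v h.ne) = cG (Fin.succ u) (Fin.succ v) (succ_ne_of_ne h.ne)))

/-- `T` is `ϑ_{m+1} : dk_{m+1,n} → dk_{m,n+1}` (the last pole becomes the first strand). -/
def IsTheta (m n : ℕ) (T : dkmn (m + 1) n →ₗ⁅ℚ⁆ dkmn m (n + 1)) : Prop :=
  (∀ (i : Fin (m + 1)) (j : Fin n),
     (∀ hi : (i : ℕ) < m, T (aG i j) = aG ⟨i, hi⟩ (Fin.succ j)) ∧
     ((i : ℕ) = m → T (aG i j) = cG 0 (Fin.succ j) (Fin.succ_ne_zero j).symm)) ∧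
  (∀ (u v : Fin n) (h : u ≠ v), T (cG u v h) = cG (Fin.succ u) (Fin.succ v) (succ_ne_of_ne h))

/-- The coface map `d_k : dk_{m,n} → dk_{m,n+1}`, built from the data of the pole
cofaces, the strand cofaces, and `ϑ_{m+1}`. -/
def coface (m n : ℕ) (Dp : ℕ → (dkmn m n →ₗ⁅ℚ⁆ dkmn (m + 1) n))
    (Ds : ℕ → (dkmn m n →ₗ⁅ℚ⁆ dkmn m (n + 1)))
    (T : dkmn (m + 1) n →ₗ⁅ℚ⁆ dkmn m (n + 1)) (k : ℕ) :
    dkmn m n →ₗ⁅ℚ⁆ dkmn m (n + 1) :=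
  if k ≤ m then T.comp (Dp k) else Ds (k - m)

/-- The algebra map `ass_{m'+1} → ass_{m'}` with `x_p ↦ x_p` (`p < m'`) and `x_{m'} ↦ 0`. -/
def setLast0A (m' : ℕ) : Ass (m' + 1) →ₐ[ℚ] Ass m' :=
  FreeAlgebra.lift ℚ fun p : Fin (m' + 1) =>
    if h : (p : ℕ) < m' then gen ⟨p, h⟩ else 0

/-- The Lie algebra map `FreeLie (Fin (m'+1)) → FreeLie (Fin m')` setting the last
generator to `0`. -/
def flSetLast0 (m' : ℕ) : FreeLieAlgebra ℚ (Fin (m' + 1)) →ₗ⁅ℚ⁆ FreeLieAlgebra ℚ (Fin m') :=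
  FreeLieAlgebra.lift ℚ fun p : Fin (m' + 1) =>
    if h : (p : ℕ) < m' then FreeLieAlgebra.of ℚ ⟨p, h⟩ else 0

/-!
Write `D(a, b) = ρ(η(a, b)) - η(ρ a, b) - η(a, ρ b)` for the failure of `ρ = ρ(ũ)` to be a
derivation of `η = η_gr`, and `ε` for the augmentation. The identities
`η(c z, b) = c η(z, b) + ε(z) η(c, b)`, `η(a, z d) = η(a, z) d + ε(z) η(a, d)` and `ε ∘ ρ = 0`
give the same rules for `D`, so `D = 0` as soon as `D(x_i, x_j) = 0` for all `i, j`. Comparing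
coefficients of words, both this and `ρ(x_1 + ⋯ + x_n) = 0` say that the coefficient of
`y x_b` in `u_a` equals that of `x_a y` in `u_b`. So (a) is the condition `ũ ∈ sder_n`.

Given (a), the product rule `μ(a b) = μ(a) b + a μ(b) + η(a, b)` makes `[ρ, μ]` a derivation,
so (b) reduces to `μ([x_i, u_i]) = 0` for every `i`. By the coefficient symmetry, the
coefficient of a word `v` in `μ([x_i, u_i])` is `[last v = i] - [first v = i]` times the cyclic
coefficient (the sum of the coefficients of all rotations of `v`) of `Σ_k x_k ∂_k u_k`, a lift
of `div ũ`. Thus (b) says that these cyclic coefficients vanish on words with different first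
and last letters.

An element of `ass_n` lies in the span of commutators iff its constant term and all its cyclic
coefficients vanish (average each word over its rotations). A word of length `≥ 2` is either a
power `a^d`, whose coefficient in the Lie element `u_a` is zero (send `x_a ↦ X`, `x_k ↦ 0` into
the commutative `ℚ[X]`), or has a rotation with different first and last letters. Hence the
condition above says exactly that `div ũ` is a combination of the `|x_i|`.
-/

namespace List

variable {α : Type*}

def dupAt (p : ℕ) (l : List α) : List α := l.take (p + 1) ++ l.drop p

@[simp] lemma dupAt_zero_cons (c : α) (v : List α) : dupAt 0 (c :: v) = c :: c :: v := rfl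

@[simp] lemma dupAt_succ_cons (p : ℕ) (c : α) (v : List α) :
    dupAt (p + 1) (c :: v) = c :: dupAt p v :=
  rfl

lemma dupAt_append_cons (l : List α) (c : α) (r : List α) :
    dupAt l.length (l ++ c :: r) = l ++ c :: c :: r := by
  simp [dupAt, take_append]

lemma exists_eq_append_cons_of_lt {p : ℕ} {v : List α} (hp : p < v.length) :
    ∃ l c r, v = l ++ c :: r ∧ l.length = p :=
  ⟨v.take p, v[p], v.drop (p + 1), by simp, by simp; omega⟩

lemma dupAt_rotate {p : ℕ} {v : List α} (hp : p < v.length) :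
    (v.dupAt p).rotate p = (v.rotate p).dupAt 0 := by
  obtain ⟨l, c, r, rfl, rfl⟩ := exists_eq_append_cons_of_lt hp
  rw [dupAt_append_cons, rotate_append_length_eq, rotate_append_length_eq]
  rfl

lemma head?_dupAt {p : ℕ} {v : List α} (hp : p < v.length) : (v.dupAt p).head? = v.head? := by
  obtain ⟨l, c, r, rfl, rfl⟩ := exists_eq_append_cons_of_lt hp
  rw [dupAt_append_cons]
  cases l <;> rfl

lemma getLast?_dupAt {p : ℕ} {v : List α} (hp : p < v.length) :
    (v.dupAt p).getLast? = v.getLast? := by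
  obtain ⟨l, c, r, rfl, rfl⟩ := exists_eq_append_cons_of_lt hp
  rw [dupAt_append_cons]
  simp [getLast?_append, getLast?_cons]

lemma length_dupAt {p : ℕ} {v : List α} (hp : p < v.length) :
    (v.dupAt p).length = v.length + 1 := by
  obtain ⟨l, c, r, rfl, rfl⟩ := exists_eq_append_cons_of_lt hp
  simp [dupAt_append_cons]
  omega

lemma dupAt_ne_nil {p : ℕ} {v : List α} (hp : p < v.length) : v.dupAt p ≠ [] :=
  ne_nil_of_length_pos (by rw [length_dupAt hp]; omega)

lemma eq_nil_or_singleton_or_cons_concat (v : List α) :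
    v = [] ∨ (∃ c, v = [c]) ∨ ∃ a y b, v = a :: (y ++ [b]) := by
  match v with
  | [] => exact .inl rfl
  | [c] => exact .inr (.inl ⟨c, rfl⟩)
  | a :: x :: xs =>
    obtain ⟨y, b, h⟩ := (eq_nil_or_concat (x :: xs)).resolve_left (cons_ne_nil _ _)
    exact .inr (.inr ⟨a, y, b, by rw [h, concat_eq_append]⟩)

lemma two_le_length_of_head?_ne_getLast? {v : List α} (hv : v.head? ≠ v.getLast?) :
    2 ≤ v.length := by
  match v with
  | [] | [_] => exact absurd rfl hv
  | _ :: _ :: _ => simp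

lemma exists_rotate_head?_ne_getLast? {v : List α} (hv : ¬v.IsChain (· = ·)) :
    ∃ r, (v.rotate r).head? ≠ (v.rotate r).getLast? := by
  rw [isChain_iff_forall_rel_of_append_cons_cons] at hv
  push Not at hv
  obtain ⟨x, y, l₁, l₂, rfl, hxy⟩ := hv
  refine ⟨(l₁ ++ [x]).length, ?_⟩
  rw [show l₁ ++ x :: y :: l₂ = (l₁ ++ [x]) ++ y :: l₂ by simp, rotate_append_length_eq,
    show y :: l₂ ++ (l₁ ++ [x]) = (y :: l₂ ++ l₁) ++ [x] by simp, getLast?_concat]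
  simpa using hxy.symm

lemma sum_rotate_add {M : Type*} [AddCommMonoid M] (v : List α) (f : List α → M) (k : ℕ) :
    ∑ r : Fin v.length, f (v.rotate (r + k)) = ∑ r : Fin v.length, f (v.rotate r) := by
  rcases Nat.eq_zero_or_pos v.length with h | h
  · have : IsEmpty (Fin v.length) := by rw [h]; infer_instance
    simp
  · have : NeZero v.length := ⟨h.ne'⟩
    refine Fintype.sum_equiv (Equiv.addRight (Fin.ofNat v.length k)) _ _ fun r => ?_
    simp [Fin.val_add, rotate_mod]

lemma sum_ite_rotate_eq_comm [DecidableEq α] {M : Type*} [AddCommMonoid M] (x : M)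
    {v w : List α} (h : w.length = v.length) :
    ∑ r : Fin w.length, (if w.rotate r = v then x else 0)
      = ∑ r : Fin v.length, if w = v.rotate r then x else 0 := by
  rcases Nat.eq_zero_or_pos v.length with h0 | h0
  · have : IsEmpty (Fin v.length) := by rw [h0]; infer_instance
    have : IsEmpty (Fin w.length) := by rw [h, h0]; infer_instance
    simp
  have : NeZero v.length := ⟨h0.ne'⟩
  refine Fintype.sum_equiv ((finCongr h).trans (Equiv.neg _)) _ _ fun r => if_congr ?_ rfl rfl
  have hr : (r : ℕ) ≤ v.length := h ▸ r.isLt.le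
  simp only [Equiv.trans_apply, Equiv.neg_apply, Fin.val_neg', finCongr_apply, Fin.val_cast]
  rw [rotate_mod]
  generalize (r : ℕ) = k at hr ⊢
  generalize hn : v.length = n at hr
  constructor
  · intro e
    rw [← e, rotate_rotate, Nat.add_sub_cancel' hr, ← hn, ← h, rotate_length]
  · intro e
    rw [e, rotate_rotate, Nat.sub_add_cancel hr, ← hn, rotate_length]

end List

namespace Ass

variable {N : ℕ}

lemma wordProd_nil : wordProd ([] : List (Fin N)) = 1 := rfl

lemma wordProd_cons (a : Fin N) (l : List (Fin N)) :
    wordProd (a :: l) = gen a * wordProd l := by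
  simp [wordProd]

lemma wordProd_append (l m : List (Fin N)) :
    wordProd (l ++ m) = wordProd l * wordProd m := by
  simp [wordProd]

lemma wordProd_singleton (a : Fin N) : wordProd [a] = gen a := by simp [wordProd]

lemma basisFreeMonoid_ofList (l : List (Fin N)) :
    FreeAlgebra.basisFreeMonoid ℚ (Fin N) (FreeMonoid.ofList l) = wordProd l := by
  simp [FreeAlgebra.basisFreeMonoid, FreeAlgebra.equivMonoidAlgebraFreeMonoid, wordProd,
    FreeMonoid.lift_apply]
  rfl

section Words

variable {A : Type} [AddCommGroup A] [Module ℚ A]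

@[simp] lemma liftWord_wordProd (f : List (Fin N) → A) (l : List (Fin N)) :
    liftWord f (wordProd l) = f l := by
  rw [← basisFreeMonoid_ofList, liftWord, Module.Basis.constr_basis, FreeMonoid.toList_ofList]

lemma linearMap_ext {F G : Ass N →ₗ[ℚ] A} (h : ∀ l, F (wordProd l) = G (wordProd l)) :
    F = G :=
  (FreeAlgebra.basisFreeMonoid ℚ (Fin N)).ext fun w => by
    rw [← FreeMonoid.ofList_toList w, basisFreeMonoid_ofList]; exact h _

lemma linearMap_ext₂ {F G : Ass N →ₗ[ℚ] Ass N →ₗ[ℚ] A}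
    (h : ∀ l m, F (wordProd l) (wordProd m) = G (wordProd l) (wordProd m)) : F = G :=
  linearMap_ext fun l => linearMap_ext (h l)

end Words

lemma mem_of_forall_wordProd {p : Submodule ℚ (Ass N)} (h : ∀ l, wordProd l ∈ p) (z : Ass N) :
    z ∈ p := by
  have hspan : Submodule.span ℚ (Set.range (FreeAlgebra.basisFreeMonoid ℚ (Fin N))) ≤ p :=
    Submodule.span_le.mpr <| Set.range_subset_iff.mpr fun w => by
      rw [← FreeMonoid.ofList_toList w, basisFreeMonoid_ofList]; exact h _
  rw [Module.Basis.span_eq] at hspan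
  exact hspan Submodule.mem_top

def wordCoeff (l : List (Fin N)) : Ass N →ₗ[ℚ] ℚ := liftWord fun m => if m = l then 1 else 0

@[simp] lemma wordCoeff_wordProd (l m : List (Fin N)) :
    wordCoeff l (wordProd m) = if m = l then 1 else 0 :=
  liftWord_wordProd _ _

lemma wordCoeff_eq_coord (l : List (Fin N)) :
    wordCoeff l = (FreeAlgebra.basisFreeMonoid ℚ (Fin N)).coord (FreeMonoid.ofList l) := by
  refine linearMap_ext fun m => ?_
  rw [wordCoeff_wordProd, ← basisFreeMonoid_ofList, Module.Basis.coord_apply,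
    Module.Basis.repr_self]
  by_cases h : m = l
  · simp [h]
  · rw [if_neg h, Finsupp.single_eq_of_ne' (a := FreeMonoid.ofList m) (a' := FreeMonoid.ofList l)
      fun e => h (congrArg FreeMonoid.toList e)]

lemma ext_wordCoeff {y z : Ass N} (h : ∀ l, wordCoeff l y = wordCoeff l z) : y = z :=
  (FreeAlgebra.basisFreeMonoid ℚ (Fin N)).ext_elem fun w => by
    simpa [wordCoeff_eq_coord] using h w.toList

lemma wordCoeff_gen_mul (a : Fin N) (v : List (Fin N)) (z : Ass N) :
    wordCoeff v (gen a * z) = if v.head? = some a then wordCoeff v.tail z else 0 := by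
  have h : (wordCoeff v).comp (LinearMap.mulLeft ℚ (gen a))
      = if v.head? = some a then wordCoeff v.tail else 0 := by
    refine linearMap_ext fun m => ?_
    simp only [LinearMap.comp_apply, LinearMap.mulLeft_apply]
    rw [← wordProd_cons, wordCoeff_wordProd]
    cases v <;> split_ifs <;> simp_all [eq_comm]
  simpa [apply_ite (fun F : Ass N →ₗ[ℚ] ℚ => F z)] using LinearMap.congr_fun h z

lemma wordCoeff_mul_gen (a : Fin N) (v : List (Fin N)) (z : Ass N) :
    wordCoeff v (z * gen a) = if v.getLast? = some a then wordCoeff v.dropLast z else 0 := by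
  have h : (wordCoeff v).comp (LinearMap.mulRight ℚ (gen a))
      = if v.getLast? = some a then wordCoeff v.dropLast else 0 := by
    refine linearMap_ext fun m => ?_
    simp only [LinearMap.comp_apply, LinearMap.mulRight_apply]
    rw [← wordProd_singleton, ← wordProd_append, wordCoeff_wordProd]
    rcases List.eq_nil_or_concat v with rfl | ⟨t, c, rfl⟩ <;> split_ifs <;> simp_all
  simpa [apply_ite (fun F : Ass N →ₗ[ℚ] ℚ => F z)] using LinearMap.congr_fun h z

lemma wordCoeff_lie_gen (k : Fin N) (v : List (Fin N)) (z : Ass N) :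
    wordCoeff v ⁅gen k, z⁆ = (if v.head? = some k then wordCoeff v.tail z else 0)
      - (if v.getLast? = some k then wordCoeff v.dropLast z else 0) := by
  rw [Ring.lie_def, map_sub, wordCoeff_gen_mul, wordCoeff_mul_gen]

lemma wordCoeff_lie_gen_of_length_le_one (k : Fin N) {v : List (Fin N)} (hv : v.length ≤ 1)
    (z : Ass N) : wordCoeff v ⁅gen k, z⁆ = 0 := by
  rw [wordCoeff_lie_gen]
  match v, hv with
  | [], _ => simp
  | [a], _ => simp

lemma wordCoeff_lie_gen_cons_concat (k a b : Fin N) (y : List (Fin N)) (z : Ass N) :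
    wordCoeff (a :: (y ++ [b])) ⁅gen k, z⁆
      = (if a = k then wordCoeff (y ++ [b]) z else 0)
        - (if b = k then wordCoeff (a :: y) z else 0) := by
  rw [wordCoeff_lie_gen, ← List.cons_append, List.getLast?_concat, List.dropLast_concat]
  simp

lemma wordCoeff_partialD (i : Fin N) (v : List (Fin N)) (z : Ass N) :
    wordCoeff v (partialD i z) = wordCoeff (v ++ [i]) z := by
  have h : (wordCoeff v).comp (partialD i) = wordCoeff (v ++ [i]) := by
    refine linearMap_ext fun m => ?_
    rw [LinearMap.comp_apply, partialD, liftWord_wordProd, wordCoeff_wordProd]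
    rcases List.eq_nil_or_concat m with rfl | ⟨t, c, rfl⟩
    · simp
    · simp only [List.concat_eq_append, List.getLast?_concat, List.dropLast_concat]
      split_ifs <;> simp_all
  exact LinearMap.congr_fun h z

lemma eq_zero_of_wordCoeff_cons_concat {z : Ass N}
    (hshort : ∀ v : List (Fin N), v.length ≤ 1 → wordCoeff v z = 0)
    (hlong : ∀ a b y, wordCoeff (a :: (y ++ [b])) z = 0) : z = 0 := by
  refine ext_wordCoeff fun v => ?_
  rw [map_zero]
  rcases List.eq_nil_or_singleton_or_cons_concat v with rfl | ⟨c, rfl⟩ | ⟨a, y, b, rfl⟩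
  · exact hshort [] (by simp)
  · exact hshort [c] (by simp)
  · exact hlong a b y

lemma algebraMapInv_gen (i : Fin N) : FreeAlgebra.algebraMapInv (gen i : Ass N) = 0 := by
  simp [gen, FreeAlgebra.algebraMapInv]

lemma algebraMapInv_wordProd (l : List (Fin N)) :
    FreeAlgebra.algebraMapInv (wordProd l) = if l = [] then 1 else 0 := by
  cases l <;> simp [wordProd_nil, wordProd_cons, algebraMapInv_gen]

section Rho

variable (u : Fin N → Ass N)

lemma rho_gen_mul (i : Fin N) (b : Ass N) :
    rho u (gen i * b) = ⁅gen i, u i⁆ * b + gen i * rho u b := by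
  have h : (rho u).comp (LinearMap.mulLeft ℚ (gen i))
      = LinearMap.mulLeft ℚ ⁅gen i, u i⁆ + (LinearMap.mulLeft ℚ (gen i)).comp (rho u) :=
    linearMap_ext fun l => by simp [← wordProd_cons, rho, rhoWord]
  simpa using LinearMap.congr_fun h b

lemma rho_algebraMap (r : ℚ) : rho u (algebraMap ℚ (Ass N) r) = 0 := by
  rw [Algebra.algebraMap_eq_smul_one, map_smul, ← wordProd_nil, rho, liftWord_wordProd,
    rhoWord, smul_zero]

lemma rho_one : rho u 1 = 0 := by simpa using rho_algebraMap u 1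

lemma rho_gen (i : Fin N) : rho u (gen i) = ⁅gen i, u i⁆ := by
  simpa [rho_one] using rho_gen_mul u i 1

lemma rho_mul (a b : Ass N) : rho u (a * b) = rho u a * b + a * rho u b := by
  induction a using FreeAlgebra.induction generalizing b with
  | grade0 r => rw [← Algebra.smul_def, map_smul, rho_algebraMap, zero_mul, zero_add,
      Algebra.smul_def]
  | grade1 i => rw [← gen, rho_gen_mul, rho_gen]
  | mul a a' ha ha' => rw [mul_assoc, ha, ha', ha]; noncomm_ring
  | add a a' ha ha' => simp only [add_mul, map_add, ha, ha']; abel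

lemma algebraMapInv_rho (z : Ass N) : FreeAlgebra.algebraMapInv (rho u z) = 0 := by
  induction z using FreeAlgebra.induction with
  | grade0 r => rw [rho_algebraMap, map_zero]
  | grade1 i => rw [← gen, rho_gen, Ring.lie_def]; simp [algebraMapInv_gen]
  | mul a b ha hb => simp [rho_mul, ha, hb]
  | add a b ha hb => simp [ha, hb]

end Rho

section Eta

lemma etaGr_wordProd (l m : List (Fin N)) :
    etaGr N (wordProd l) (wordProd m) = etaWord l m := by
  simp [etaGr]

lemma etaWord_append_left (c : List (Fin N)) {l : List (Fin N)} (hl : l ≠ [])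
    (m : List (Fin N)) : etaWord (c ++ l) m = wordProd c * etaWord l m := by
  unfold etaWord
  rw [List.getLast?_append_of_ne_nil _ hl, List.dropLast_append_of_ne_nil hl]
  rcases l.getLast? with _ | a <;> rcases m with _ | ⟨b, t⟩ <;> simp [wordProd_append]

lemma etaWord_append_right (l : List (Fin N)) {m : List (Fin N)} (hm : m ≠ [])
    (r : List (Fin N)) : etaWord l (m ++ r) = etaWord l m * wordProd r := by
  obtain ⟨b, t, rfl⟩ := List.exists_cons_of_ne_nil hm
  unfold etaWord
  rcases l.getLast? with _ | a <;> simp [wordProd_cons, wordProd_append, mul_assoc]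

lemma etaWord_gen_right (l : List (Fin N)) (j : Fin N) :
    etaWord l [j] = if l.getLast? = some j then -wordProd l else 0 := by
  unfold etaWord
  rcases List.eq_nil_or_concat l with rfl | ⟨t, c, rfl⟩ <;> simp

lemma etaWord_gen_left (i : Fin N) (m : List (Fin N)) :
    etaWord [i] m = if m.head? = some i then -wordProd m else 0 := by
  unfold etaWord
  rcases m with _ | ⟨b, t⟩
  · rfl
  · by_cases h : i = b <;> simp [h, wordProd_cons, eq_comm]

lemma etaGr_one_left (b : Ass N) : etaGr N 1 b = 0 := by
  have h : etaGr N 1 = 0 := linearMap_ext fun m => by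
    rw [← wordProd_nil, etaGr_wordProd]
    rcases m with _ | ⟨b, t⟩ <;> rfl
  rw [h, LinearMap.zero_apply]

lemma etaGr_one_right (a : Ass N) : etaGr N a 1 = 0 := by
  have h : (etaGr N).flip 1 = 0 := linearMap_ext fun l => by
    rw [LinearMap.flip_apply, ← wordProd_nil, etaGr_wordProd]
    unfold etaWord
    rcases l.getLast? with _ | a <;> rfl
  exact LinearMap.congr_fun h a

lemma etaGr_mul_wordProd_left {l : List (Fin N)} (hl : l ≠ []) (c b : Ass N) :
    etaGr N (c * wordProd l) b = c * etaGr N (wordProd l) b := by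
  have h : (etaGr N).comp (LinearMap.mulRight ℚ (wordProd l))
      = (LinearMap.mul ℚ (Ass N)).compl₂ (etaGr N (wordProd l)) :=
    linearMap_ext₂ fun lc m => by
      simp [← wordProd_append, etaGr_wordProd, etaWord_append_left lc hl]
  simpa using LinearMap.congr_fun₂ h c b

lemma etaGr_wordProd_mul_right (a : Ass N) {m : List (Fin N)} (hm : m ≠ []) (d : Ass N) :
    etaGr N a (wordProd m * d) = etaGr N a (wordProd m) * d := by
  have h : (etaGr N).compl₂ (LinearMap.mulLeft ℚ (wordProd m))
      = (LinearMap.mul ℚ (Ass N)).comp ((etaGr N).flip (wordProd m)) :=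
    linearMap_ext₂ fun la r => by
      simp [← wordProd_append, etaGr_wordProd, etaWord_append_right la hm]
  simpa using LinearMap.congr_fun₂ h a d

lemma etaGr_mul_left (c z b : Ass N) :
    etaGr N (c * z) b = c * etaGr N z b + FreeAlgebra.algebraMapInv z • etaGr N c b := by
  have h : ((etaGr N).flip b).comp (LinearMap.mulLeft ℚ c)
      = (LinearMap.mulLeft ℚ c).comp ((etaGr N).flip b)
        + FreeAlgebra.algebraMapInv.toLinearMap.smulRight (etaGr N c b) :=
    linearMap_ext fun l => by
      rcases eq_or_ne l [] with rfl | hl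
      · simp [wordProd_nil, etaGr_one_left]
      · simp [etaGr_mul_wordProd_left hl, algebraMapInv_wordProd, hl]
  simpa using LinearMap.congr_fun h z

lemma etaGr_mul_right (a z d : Ass N) :
    etaGr N a (z * d) = etaGr N a z * d + FreeAlgebra.algebraMapInv z • etaGr N a d := by
  have h : (etaGr N a).comp (LinearMap.mulRight ℚ d)
      = (LinearMap.mulRight ℚ d).comp (etaGr N a)
        + FreeAlgebra.algebraMapInv.toLinearMap.smulRight (etaGr N a d) :=
    linearMap_ext fun m => by
      rcases eq_or_ne m [] with rfl | hm
      · simp [wordProd_nil, etaGr_one_right]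
      · simp [etaGr_wordProd_mul_right a hm, algebraMapInv_wordProd, hm]
  simpa using LinearMap.congr_fun h z

lemma etaGr_gen_gen (i j : Fin N) :
    etaGr N (gen i) (gen j) = if i = j then -gen i else 0 := by
  rw [← wordProd_singleton i, ← wordProd_singleton j, etaGr_wordProd, etaWord_gen_left]
  by_cases h : i = j <;> simp [h, eq_comm, wordProd_singleton]

lemma wordCoeff_etaGr_gen_right (j : Fin N) (v : List (Fin N)) (z : Ass N) :
    wordCoeff v (etaGr N z (gen j)) = if v.getLast? = some j then -wordCoeff v z else 0 := by
  have h : (wordCoeff v).comp ((etaGr N).flip (gen j))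
      = if v.getLast? = some j then -wordCoeff v else 0 :=
    linearMap_ext fun m => by
      rw [LinearMap.comp_apply, LinearMap.flip_apply, ← wordProd_singleton, etaGr_wordProd,
        etaWord_gen_right]
      by_cases hm : m = v <;> split_ifs <;> simp_all
  simpa [apply_ite (fun F : Ass N →ₗ[ℚ] ℚ => F z)] using LinearMap.congr_fun h z

lemma wordCoeff_etaGr_gen_left (i : Fin N) (v : List (Fin N)) (z : Ass N) :
    wordCoeff v (etaGr N (gen i) z) = if v.head? = some i then -wordCoeff v z else 0 := by
  have h : (wordCoeff v).comp (etaGr N (gen i))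
      = if v.head? = some i then -wordCoeff v else 0 :=
    linearMap_ext fun m => by
      rw [LinearMap.comp_apply, ← wordProd_singleton, etaGr_wordProd, etaWord_gen_left]
      by_cases hm : m = v <;> split_ifs <;> simp_all
  simpa [apply_ite (fun F : Ass N →ₗ[ℚ] ℚ => F z)] using LinearMap.congr_fun h z

end Eta

section Mu

lemma muGr_wordProd (l : List (Fin N)) : muGr N (wordProd l) = muWord l := liftWord_wordProd _ _

lemma muWord_cons (a : Fin N) (w : List (Fin N)) :
    muWord (a :: w) = etaWord [a] w + gen a * muWord w := by
  rw [etaWord_gen_left]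
  rcases w with _ | ⟨b, t⟩
  · simp [muWord]
  · by_cases h : a = b
    · subst h; simp [muWord, wordProd_cons]
    · simp [muWord, h, Ne.symm h]

lemma muGr_gen_mul (i : Fin N) (b : Ass N) :
    muGr N (gen i * b) = etaGr N (gen i) b + gen i * muGr N b := by
  have h : (muGr N).comp (LinearMap.mulLeft ℚ (gen i))
      = etaGr N (gen i) + (LinearMap.mulLeft ℚ (gen i)).comp (muGr N) :=
    linearMap_ext fun l => by
      simp only [LinearMap.comp_apply, LinearMap.add_apply, LinearMap.mulLeft_apply]
      rw [← wordProd_cons, muGr_wordProd, muWord_cons, ← wordProd_singleton, etaGr_wordProd,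
        muGr_wordProd, wordProd_singleton]
  simpa using LinearMap.congr_fun h b

lemma muGr_algebraMap (r : ℚ) : muGr N (algebraMap ℚ (Ass N) r) = 0 := by
  rw [Algebra.algebraMap_eq_smul_one, map_smul, ← wordProd_nil, muGr_wordProd, muWord, smul_zero]

lemma muGr_one : muGr N (1 : Ass N) = 0 := by simpa using muGr_algebraMap (N := N) 1

lemma muGr_gen (i : Fin N) : muGr N (gen i) = 0 := by
  simpa [muGr_one, etaGr_one_right] using muGr_gen_mul i 1

lemma muGr_mul (a b : Ass N) :
    muGr N (a * b) = muGr N a * b + a * muGr N b + etaGr N a b := by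
  induction a using FreeAlgebra.induction generalizing b with
  | grade0 r =>
    rw [Algebra.algebraMap_eq_smul_one]
    simp [muGr_one, etaGr_one_left]
  | grade1 i => rw [← gen, muGr_gen_mul, muGr_gen, zero_mul, zero_add, add_comm]
  | mul a a' ha ha' =>
    rw [mul_assoc, ha, ha', ha, etaGr_mul_left, etaGr_mul_right]
    simp only [mul_add, add_mul, mul_assoc]
    abel
  | add a a' ha ha' => simp only [add_mul, map_add, LinearMap.add_apply, ha, ha']; abel

lemma wordCoeff_muGr (v : List (Fin N)) (z : Ass N) :
    wordCoeff v (muGr N z) = -∑ p : Fin v.length, wordCoeff (v.dupAt p) z := by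
  suffices h : ∀ l v, wordCoeff v (muGr N (wordProd l))
      = -∑ p : Fin v.length, wordCoeff (v.dupAt p) (wordProd l) by
    have h' : (wordCoeff v).comp (muGr N) = -∑ p : Fin v.length, wordCoeff (v.dupAt p) :=
      linearMap_ext fun l => by simpa using h l v
    simpa using LinearMap.congr_fun h' z
  intro l
  induction l with
  | nil =>
    intro v
    rw [wordProd_nil, muGr_one, map_zero, Finset.sum_eq_zero, neg_zero]
    intro p _
    rw [← wordProd_nil, wordCoeff_wordProd, if_neg (List.dupAt_ne_nil p.isLt).symm]
  | cons a t ih =>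
    intro v
    rw [wordProd_cons, muGr_gen_mul, map_add, wordCoeff_etaGr_gen_left, wordCoeff_gen_mul]
    rcases v with _ | ⟨c, v⟩
    · simp
    rw [List.length_cons, Fin.sum_univ_succ]
    simp only [Fin.val_zero, Fin.val_succ, List.dupAt_zero_cons, List.dupAt_succ_cons,
      wordCoeff_gen_mul, List.head?_cons, List.tail_cons, ih, Option.some.injEq]
    by_cases h : c = a
    · simp only [h, if_true]
      ring
    · simp [h]

end Mu

section Trace

lemma wordCoeff_nil :
    wordCoeff [] = (FreeAlgebra.algebraMapInv : Ass N →ₐ[ℚ] ℚ).toLinearMap :=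
  linearMap_ext fun l => by simp [algebraMapInv_wordProd]

lemma trRel_le_ker_algebraMapInv :
    trRel N ≤ LinearMap.ker (FreeAlgebra.algebraMapInv : Ass N →ₐ[ℚ] ℚ).toLinearMap :=
  Submodule.span_le.mpr fun _ ⟨a, b, e⟩ => by simp [e, mul_comm]

def cyclicCoeff (v : List (Fin N)) : Ass N →ₗ[ℚ] ℚ :=
  ∑ r : Fin v.length, wordCoeff (v.rotate r)

lemma cyclicCoeff_wordProd (v w : List (Fin N)) :
    cyclicCoeff v (wordProd w) = ∑ r : Fin v.length, if w = v.rotate r then 1 else 0 := by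
  simp [cyclicCoeff]

lemma cyclicCoeff_rotate (v : List (Fin N)) (s : ℕ) :
    cyclicCoeff (v.rotate s) = cyclicCoeff v := by
  rw [cyclicCoeff, cyclicCoeff, ← List.sum_rotate_add v wordCoeff s]
  exact Fintype.sum_equiv (finCongr (List.length_rotate v s)) _ _ fun r => by
    simp [List.rotate_rotate, add_comm]

lemma cyclicCoeff_wordProd_rotate (v w : List (Fin N)) (k : ℕ) :
    cyclicCoeff v (wordProd (w.rotate k)) = cyclicCoeff v (wordProd w) := by
  rw [cyclicCoeff_wordProd, cyclicCoeff_wordProd,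
    ← List.sum_rotate_add v (fun x => if w.rotate k = x then (1 : ℚ) else 0) k]
  simp only [← List.rotate_rotate, List.rotate_eq_rotate]

lemma cyclicCoeff_mul_comm (v : List (Fin N)) (a b : Ass N) :
    cyclicCoeff v (a * b) = cyclicCoeff v (b * a) := by
  have h : (LinearMap.mul ℚ (Ass N)).compr₂ (cyclicCoeff v)
      = ((LinearMap.mul ℚ (Ass N)).compr₂ (cyclicCoeff v)).flip :=
    linearMap_ext₂ fun l m => by
      simp only [LinearMap.compr₂_apply, LinearMap.flip_apply, LinearMap.mul_apply',
        ← wordProd_append]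
      rw [← List.rotate_append_length_eq, cyclicCoeff_wordProd_rotate]
  simpa using LinearMap.congr_fun₂ h a b

lemma trRel_le_ker_cyclicCoeff (v : List (Fin N)) : trRel N ≤ LinearMap.ker (cyclicCoeff v) :=
  Submodule.span_le.mpr fun _ ⟨a, b, e⟩ => by simp [e, cyclicCoeff_mul_comm]

lemma wordProd_sub_wordProd_rotate_mem (l : List (Fin N)) (r : ℕ) :
    wordProd l - wordProd (l.rotate r) ∈ trRel N := by
  induction r generalizing l with
  | zero => simp
  | succ r ih =>
    rcases l with _ | ⟨a, t⟩
    · simp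
    have hcomm : wordProd (a :: t) - wordProd (t ++ [a]) ∈ trRel N :=
      Submodule.subset_span ⟨gen a, wordProd t, by
        rw [wordProd_cons, wordProd_append, wordProd_singleton]⟩
    rw [List.rotate_cons_succ, ← sub_add_sub_cancel _ (wordProd (t ++ [a]))]
    exact add_mem hcomm (ih _)

def rotationAverage (N : ℕ) : Ass N →ₗ[ℚ] Ass N :=
  liftWord fun l =>
    if l = [] then 1 else (l.length : ℚ)⁻¹ • ∑ r : Fin l.length, wordProd (l.rotate r)

lemma sub_rotationAverage_mem (z : Ass N) : z - rotationAverage N z ∈ trRel N := by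
  refine mem_of_forall_wordProd (p := (trRel N).comap (LinearMap.id - rotationAverage N))
    (fun l => ?_) z
  rw [Submodule.mem_comap, LinearMap.sub_apply, LinearMap.id_apply, rotationAverage,
    liftWord_wordProd]
  split_ifs with hl
  · simp [hl, wordProd_nil]
  have hn : (l.length : ℚ) ≠ 0 := by simpa using hl
  have key : wordProd l - (l.length : ℚ)⁻¹ • ∑ r : Fin l.length, wordProd (l.rotate r)
      = (l.length : ℚ)⁻¹ • ∑ r : Fin l.length, (wordProd l - wordProd (l.rotate r)) := by
    rw [Finset.sum_sub_distrib, smul_sub, Finset.sum_const, Finset.card_univ, Fintype.card_fin,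
      ← Nat.cast_smul_eq_nsmul ℚ, smul_smul, inv_mul_cancel₀ hn, one_smul]
  rw [key]
  exact Submodule.smul_mem _ _ (Submodule.sum_mem _ fun r _ => wordProd_sub_wordProd_rotate_mem l r)

lemma wordCoeff_rotationAverage {v : List (Fin N)} (hv : v ≠ []) (z : Ass N) :
    wordCoeff v (rotationAverage N z) = (v.length : ℚ)⁻¹ * cyclicCoeff v z := by
  have h : (wordCoeff v).comp (rotationAverage N) = (v.length : ℚ)⁻¹ • cyclicCoeff v :=
    linearMap_ext fun w => by
      rw [LinearMap.comp_apply, rotationAverage, liftWord_wordProd, LinearMap.smul_apply,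
        cyclicCoeff_wordProd]
      split_ifs with hw
      · simp [hw, ← wordProd_nil, Ne.symm hv, eq_comm (a := ([] : List (Fin N)))]
      rw [map_smul, map_sum]
      simp only [wordCoeff_wordProd]
      by_cases hl : w.length = v.length
      · rw [List.sum_ite_rotate_eq_comm _ hl, hl]
      · have hne : ∀ r : ℕ, w.rotate r ≠ v ∧ w ≠ v.rotate r := fun r =>
          ⟨fun e => hl (by simpa using congrArg List.length e),
            fun e => hl (by simpa using congrArg List.length e)⟩
        simp [hne]
  simpa using LinearMap.congr_fun h z

lemma mem_trRel_iff (z : Ass N) :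
    z ∈ trRel N ↔ FreeAlgebra.algebraMapInv z = 0 ∧ ∀ v ≠ [], cyclicCoeff v z = 0 := by
  refine ⟨fun hz => ⟨trRel_le_ker_algebraMapInv hz, fun v _ => trRel_le_ker_cyclicCoeff v hz⟩,
    fun ⟨h0, h⟩ => ?_⟩
  have hsub := sub_rotationAverage_mem z
  have hA : rotationAverage N z = 0 := ext_wordCoeff fun v => by
    rcases eq_or_ne v [] with rfl | hv
    · have := trRel_le_ker_algebraMapInv hsub
      simp_all [wordCoeff_nil]
    · rw [wordCoeff_rotationAverage hv, h v hv, mul_zero, map_zero]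
  simpa [hA] using hsub

lemma cyclicCoeff_gen {v : List (Fin N)} (hv : 2 ≤ v.length) (i : Fin N) :
    cyclicCoeff v (gen i) = 0 := by
  rw [← wordProd_singleton, cyclicCoeff_wordProd]
  refine Finset.sum_eq_zero fun r _ => if_neg fun e => ?_
  have := congrArg List.length e
  simp only [List.length_singleton, List.length_rotate] at this
  omega

lemma cyclicCoeff_singleton (c : Fin N) : cyclicCoeff [c] = wordCoeff [c] := by
  simp [cyclicCoeff]

end Trace

section LieElements

def collapseTo (a : Fin N) : Ass N →ₐ[ℚ] Polynomial ℚ :=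
  FreeAlgebra.lift ℚ fun k => if k = a then Polynomial.X else 0

lemma collapseTo_gen (a k : Fin N) :
    collapseTo a (gen k) = if k = a then Polynomial.X else 0 := by
  rw [collapseTo, gen, FreeAlgebra.lift_ι_apply]

lemma collapseTo_wordProd (a : Fin N) (l : List (Fin N)) :
    collapseTo a (wordProd l) = if ∀ x ∈ l, x = a then Polynomial.X ^ l.length else 0 := by
  induction l with
  | nil => simp [wordProd_nil]
  | cons c t ih =>
    rw [wordProd_cons, map_mul, ih, collapseTo_gen]
    by_cases hc : c = a <;> simp [hc, pow_succ']

lemma wordCoeff_replicate (a : Fin N) (d : ℕ) (z : Ass N) :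
    wordCoeff (List.replicate d a) z = (collapseTo a z).coeff d := by
  have h : wordCoeff (List.replicate d a)
      = (Polynomial.lcoeff ℚ d).comp (collapseTo a).toLinearMap :=
    linearMap_ext fun l => by
      simp only [wordCoeff_wordProd, LinearMap.comp_apply, AlgHom.toLinearMap_apply,
        collapseTo_wordProd, Polynomial.lcoeff_apply, List.eq_replicate_iff]
      by_cases hl : ∀ x ∈ l, x = a
      · rw [if_pos hl, Polynomial.coeff_X_pow]
        by_cases hd : l.length = d
        · rw [if_pos ⟨hd, hl⟩, if_pos hd.symm]
        · rw [if_neg fun h => hd h.1, if_neg (Ne.symm hd)]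
      · rw [if_neg hl, if_neg fun h => hl h.2, Polynomial.coeff_zero]
  exact LinearMap.congr_fun h z

lemma collapseTo_mem_span_X {z : Ass N} (hz : z ∈ lieN N) (a : Fin N) :
    collapseTo a z ∈ ℚ ∙ Polynomial.X := by
  induction hz using LieSubalgebra.lieSpan_induction with
  | mem x hx =>
    obtain ⟨k, rfl⟩ := hx
    rw [collapseTo_gen]
    split_ifs
    · exact Submodule.mem_span_singleton_self _
    · exact zero_mem _
  | zero => rw [map_zero]; exact zero_mem _
  | add x y _ _ hx hy => rw [map_add]; exact add_mem hx hy
  | smul c x _ hx => rw [map_smul]; exact Submodule.smul_mem _ c hx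
  | lie x y _ _ _ _ =>
    rw [Ring.lie_def, map_sub, map_mul, map_mul, mul_comm, sub_self]
    exact zero_mem _

lemma wordCoeff_replicate_eq_zero_of_mem_lieN {z : Ass N} (hz : z ∈ lieN N) (a : Fin N)
    {d : ℕ} (hd : 2 ≤ d) : wordCoeff (List.replicate d a) z = 0 := by
  obtain ⟨c, hc⟩ := Submodule.mem_span_singleton.mp (collapseTo_mem_span_X hz a)
  rw [wordCoeff_replicate, ← hc, Polynomial.coeff_smul, Polynomial.coeff_X, if_neg (by omega),
    smul_zero]

end LieElements

section Derivations

variable (u : Fin N → Ass N)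

def CoeffSymmetric : Prop :=
  ∀ (a b : Fin N) (y : List (Fin N)), wordCoeff (y ++ [b]) (u a) = wordCoeff (a :: y) (u b)

lemma wordCoeff_sum_lie_gen (a b : Fin N) (y : List (Fin N)) :
    wordCoeff (a :: (y ++ [b])) (∑ k, ⁅gen k, u k⁆)
      = wordCoeff (y ++ [b]) (u a) - wordCoeff (a :: y) (u b) := by
  simp [wordCoeff_lie_gen_cons_concat, Finset.sum_sub_distrib]

lemma rho_sum_gen_eq_zero_iff : rho u (∑ i, gen i) = 0 ↔ CoeffSymmetric u := by
  simp only [map_sum, rho_gen]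
  refine ⟨fun h a b y => ?_, fun h => eq_zero_of_wordCoeff_cons_concat (fun v hv => ?_)
    fun a b y => ?_⟩
  · rw [← sub_eq_zero, ← wordCoeff_sum_lie_gen, h, map_zero]
  · simp [wordCoeff_lie_gen_of_length_le_one _ hv]
  · rw [wordCoeff_sum_lie_gen, h, sub_self]

section Defect

def etaDefect : Ass N →ₗ[ℚ] Ass N →ₗ[ℚ] Ass N :=
  (etaGr N).compr₂ (rho u) - (etaGr N).comp (rho u) - (etaGr N).compl₂ (rho u)

lemma etaDefect_apply (a b : Ass N) :
    etaDefect u a b = rho u (etaGr N a b) - etaGr N (rho u a) b - etaGr N a (rho u b) :=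
  rfl

lemma etaDefect_eq_zero_iff :
    etaDefect u = 0
      ↔ ∀ a b, rho u (etaGr N a b) = etaGr N (rho u a) b + etaGr N a (rho u b) := by
  simp only [LinearMap.ext_iff₂, LinearMap.zero_apply, etaDefect_apply, sub_sub, sub_eq_zero]

lemma etaDefect_mul_left (c z b : Ass N) :
    etaDefect u (c * z) b
      = c * etaDefect u z b + FreeAlgebra.algebraMapInv z • etaDefect u c b := by
  simp only [etaDefect_apply, etaGr_mul_left, rho_mul, map_add, map_smul, LinearMap.add_apply,
    algebraMapInv_rho, zero_smul, mul_sub, smul_sub]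
  abel

lemma etaDefect_mul_right (a z d : Ass N) :
    etaDefect u a (z * d)
      = etaDefect u a z * d + FreeAlgebra.algebraMapInv z • etaDefect u a d := by
  simp only [etaDefect_apply, etaGr_mul_right, rho_mul, map_add, map_smul,
    algebraMapInv_rho, zero_smul, sub_mul, smul_sub]
  abel

lemma etaDefect_one_left (b : Ass N) : etaDefect u 1 b = 0 := by
  simpa using etaDefect_mul_left u 1 1 b

lemma etaDefect_one_right (a : Ass N) : etaDefect u a 1 = 0 := by
  simpa using etaDefect_mul_right u a 1 1

lemma etaDefect_eq_zero_iff_gen :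
    etaDefect u = 0 ↔ ∀ i j, etaDefect u (gen i) (gen j) = 0 := by
  refine ⟨fun h i j => by rw [h, LinearMap.zero_apply, LinearMap.zero_apply], fun h => ?_⟩
  have hgen : ∀ i m, etaDefect u (gen i) (wordProd m) = 0 := by
    intro i m
    induction m with
    | nil => exact etaDefect_one_right u _
    | cons j m ih =>
      rw [wordProd_cons, etaDefect_mul_right, h, ih, zero_mul, smul_zero, add_zero]
  refine linearMap_ext₂ fun l m => ?_
  rw [LinearMap.zero_apply, LinearMap.zero_apply]
  induction l with
  | nil => exact etaDefect_one_left u _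
  | cons i l ih =>
    rw [wordProd_cons, etaDefect_mul_left, ih, hgen, mul_zero, smul_zero, add_zero]

lemma wordCoeff_etaDefect_gen (i j : Fin N) (v : List (Fin N)) :
    wordCoeff v (etaDefect u (gen i) (gen j))
      = (if v.getLast? = some j then wordCoeff v ⁅gen i, u i⁆ else 0)
        + (if v.head? = some i then wordCoeff v ⁅gen j, u j⁆ else 0)
        - (if i = j then wordCoeff v ⁅gen i, u i⁆ else 0) := by
  rw [etaDefect_apply, etaGr_gen_gen, rho_gen, rho_gen, map_sub, map_sub,
    wordCoeff_etaGr_gen_right, wordCoeff_etaGr_gen_left]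
  by_cases hij : i = j
  · subst hij
    rw [if_pos rfl, if_pos rfl, map_neg, rho_gen, map_neg]
    split_ifs <;> ring
  · rw [if_neg hij, if_neg hij, map_zero, map_zero]
    split_ifs <;> ring

lemma wordCoeff_etaDefect_gen_cons_concat (i j a b : Fin N) (y : List (Fin N)) :
    wordCoeff (a :: (y ++ [b])) (etaDefect u (gen i) (gen j))
      = if a = i ∧ b = j then wordCoeff (y ++ [b]) (u a) - wordCoeff (a :: y) (u b) else 0 := by
  rw [wordCoeff_etaDefect_gen, wordCoeff_lie_gen_cons_concat, wordCoeff_lie_gen_cons_concat,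
    ← List.cons_append, List.getLast?_concat,
    List.head?_append_of_ne_nil _ (List.cons_ne_nil _ _)]
  rcases eq_or_ne i j with rfl | hij
  · by_cases hai : a = i <;> by_cases hbi : b = i <;> simp_all
  · have hji := hij.symm
    by_cases hai : a = i <;> by_cases hbj : b = j <;> simp_all [sub_eq_add_neg]

lemma etaDefect_gen_eq_zero_iff :
    (∀ i j, etaDefect u (gen i) (gen j) = 0) ↔ CoeffSymmetric u := by
  refine ⟨fun h a b y => ?_, fun h i j => eq_zero_of_wordCoeff_cons_concat (fun v hv => ?_)
    fun a b y => ?_⟩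
  · have hab := wordCoeff_etaDefect_gen_cons_concat u a b a b y
    rwa [h, map_zero, if_pos ⟨rfl, rfl⟩, eq_comm, sub_eq_zero] at hab
  · simp [wordCoeff_etaDefect_gen, wordCoeff_lie_gen_of_length_le_one _ hv]
  · rw [wordCoeff_etaDefect_gen_cons_concat, h, sub_self, ite_self]

end Defect

lemma rho_muGr_comm_iff (hη : etaDefect u = 0) :
    (∀ a, rho u (muGr N a) = muGr N (rho u a)) ↔ ∀ i, muGr N ⁅gen i, u i⁆ = 0 := by
  refine ⟨fun h i => by rw [← rho_gen, ← h, muGr_gen, map_zero], fun h a => ?_⟩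
  induction a using FreeAlgebra.induction with
  | grade0 r => rw [muGr_algebraMap, rho_algebraMap, map_zero, map_zero]
  | grade1 i => rw [← gen, muGr_gen, rho_gen, h, map_zero]
  | mul a b ha hb =>
    rw [muGr_mul, rho_mul, map_add, map_add, rho_mul, rho_mul, ha, hb,
      (etaDefect_eq_zero_iff u).mp hη a b, map_add, muGr_mul, muGr_mul]
    abel
  | add a b ha hb => rw [map_add, map_add, ha, hb, map_add, map_add]

end Derivations

section Divergence

variable {u : Fin N → Ass N}

def headCoeff (u : Fin N → Ass N) : List (Fin N) → ℚ
  | [] => 0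
  | a :: t => wordCoeff t (u a)

def divRep (u : Fin N → Ass N) : Ass N := ∑ k, gen k * partialD k (u k)

lemma divergence_eq_trM_divRep (u : Fin N → Ass N) : divergence u = trM N (divRep u) := by
  rw [divergence, divRep, map_sum]

lemma headCoeff_rotate (h : CoeffSymmetric u) (m : List (Fin N)) (r : ℕ) :
    headCoeff u (m.rotate r) = headCoeff u m := by
  have rotate_one : ∀ m : List (Fin N), headCoeff u (m.rotate 1) = headCoeff u m
    | [] => rfl
    | [a] => by simp
    | a :: c :: y => h c a y
  induction r with
  | zero => rw [List.rotate_zero]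
  | succ r ih => rw [← List.rotate_rotate, rotate_one, ih]

lemma headCoeff_dupAt (h : CoeffSymmetric u) {p : ℕ} {v : List (Fin N)} (hp : p < v.length) :
    headCoeff u (v.dupAt p) = headCoeff u ((v.rotate p).dupAt 0) := by
  rw [← List.dupAt_rotate hp, headCoeff_rotate h]

lemma wordCoeff_divRep (h : CoeffSymmetric u) (v : List (Fin N)) :
    wordCoeff v (divRep u) = headCoeff u (v.dupAt 0) := by
  rcases v with _ | ⟨a, t⟩
  · simp [divRep, wordCoeff_gen_mul, headCoeff, List.dupAt]
  · simp [divRep, wordCoeff_gen_mul, wordCoeff_partialD, headCoeff, h a a t]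

lemma cyclicCoeff_divRep (h : CoeffSymmetric u) (v : List (Fin N)) :
    cyclicCoeff v (divRep u) = ∑ p : Fin v.length, headCoeff u (v.dupAt p) := by
  simp only [cyclicCoeff, LinearMap.sum_apply, wordCoeff_divRep h,
    headCoeff_dupAt h (Fin.isLt _)]

lemma wordCoeff_tail_eq_headCoeff {i : Fin N} {w : List (Fin N)} (hw : w.head? = some i) :
    wordCoeff w.tail (u i) = headCoeff u w := by
  rcases w with _ | ⟨a, t⟩
  · simp at hw
  · obtain rfl : a = i := by simpa using hw
    rfl

lemma wordCoeff_dropLast_eq_headCoeff (h : CoeffSymmetric u) {i : Fin N} {w : List (Fin N)}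
    (hw : w.getLast? = some i) (hlen : 2 ≤ w.length) :
    wordCoeff w.dropLast (u i) = headCoeff u w := by
  rcases List.eq_nil_or_singleton_or_cons_concat w with rfl | ⟨c, rfl⟩ | ⟨a, y, b, rfl⟩
  · simp at hlen
  · simp at hlen
  · rw [← List.cons_append, List.getLast?_concat, Option.some_inj] at hw
    subst hw
    rw [← List.cons_append, List.dropLast_concat]
    exact (h a b y).symm

lemma wordCoeff_muGr_lie_gen (h : CoeffSymmetric u) (i : Fin N) (v : List (Fin N)) :
    wordCoeff v (muGr N ⁅gen i, u i⁆)
      = ((if v.getLast? = some i then 1 else 0) - (if v.head? = some i then 1 else 0))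
        * cyclicCoeff v (divRep u) := by
  have hL : ∀ p : Fin v.length, wordCoeff (v.dupAt p) (gen i * u i)
      = if v.head? = some i then headCoeff u (v.dupAt p) else 0 := fun p => by
    rw [wordCoeff_gen_mul, List.head?_dupAt p.isLt]
    split_ifs with hi
    · exact wordCoeff_tail_eq_headCoeff ((List.head?_dupAt p.isLt).trans hi)
    · rfl
  have hR : ∀ p : Fin v.length, wordCoeff (v.dupAt p) (u i * gen i)
      = if v.getLast? = some i then headCoeff u (v.dupAt p) else 0 := fun p => by
    rw [wordCoeff_mul_gen, List.getLast?_dupAt p.isLt]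
    split_ifs with hi
    · refine wordCoeff_dropLast_eq_headCoeff h ((List.getLast?_dupAt p.isLt).trans hi) ?_
      rw [List.length_dupAt p.isLt]
      have := p.isLt
      omega
    · rfl
  rw [Ring.lie_def, map_sub, map_sub, wordCoeff_muGr, wordCoeff_muGr, cyclicCoeff_divRep h]
  simp only [hL, hR]
  split_ifs <;> simp

lemma muGr_lie_gen_eq_zero_iff (h : CoeffSymmetric u) :
    (∀ i, muGr N ⁅gen i, u i⁆ = 0)
      ↔ ∀ v : List (Fin N), v.head? ≠ v.getLast? → cyclicCoeff v (divRep u) = 0 := by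
  refine ⟨fun hμ v hv => ?_, fun h0 i => ext_wordCoeff fun v => ?_⟩
  · rcases hb : v.getLast? with _ | b
    · simp_all
    have := congrArg (wordCoeff v) (hμ b)
    rw [wordCoeff_muGr_lie_gen h, map_zero, if_pos hb, if_neg (fun e => hv (e.trans hb.symm)),
      sub_zero, one_mul] at this
    exact this
  · rw [wordCoeff_muGr_lie_gen h, map_zero]
    by_cases hv : v.head? = v.getLast?
    · rw [hv, sub_self, zero_mul]
    · rw [h0 v hv, mul_zero]

lemma cyclicCoeff_divRep_eq_zero (hu : IsTDer u) (h : CoeffSymmetric u)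
    (h0 : ∀ v : List (Fin N), v.head? ≠ v.getLast? → cyclicCoeff v (divRep u) = 0)
    {v : List (Fin N)} (hv : 2 ≤ v.length) : cyclicCoeff v (divRep u) = 0 := by
  by_cases hc : v.IsChain (· = ·)
  · obtain ⟨a, t, rfl⟩ :=
      List.exists_cons_of_ne_nil (List.ne_nil_of_length_pos (by omega : 0 < v.length))
    rw [List.isChain_cons_eq_iff_eq_replicate] at hc
    have hrep : a :: t = List.replicate (t.length + 1) a := by rw [List.replicate_succ, ← hc]
    rw [hrep, cyclicCoeff, LinearMap.sum_apply]
    refine Finset.sum_eq_zero fun r _ => ?_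
    rw [List.rotate_replicate, wordCoeff_divRep h, List.replicate_succ, List.dupAt_zero_cons,
      headCoeff, ← List.replicate_succ]
    exact wordCoeff_replicate_eq_zero_of_mem_lieN (hu a) a (by simpa using hv)
  · obtain ⟨r, hr⟩ := List.exists_rotate_head?_ne_getLast? hc
    rw [← cyclicCoeff_rotate v r]
    exact h0 _ hr

lemma exists_divergence_eq_iff (hu : IsTDer u) (h : CoeffSymmetric u) :
    (∃ cf : Fin N → ℚ, divergence u = ∑ i, cf i • trM N (gen i))
      ↔ ∀ v : List (Fin N), v.head? ≠ v.getLast? → cyclicCoeff v (divRep u) = 0 := by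
  have hmem : ∀ cf : Fin N → ℚ, divergence u = ∑ i, cf i • trM N (gen i)
      ↔ divRep u - ∑ i, cf i • gen i ∈ trRel N := fun cf => by
    rw [divergence_eq_trM_divRep]
    simp only [← map_smul, ← map_sum, trM]
    exact Submodule.Quotient.eq _
  simp only [hmem]
  constructor
  · rintro ⟨cf, hz⟩ v hv
    simpa [cyclicCoeff_gen (List.two_le_length_of_head?_ne_getLast? hv)] using
      trRel_le_ker_cyclicCoeff v hz
  · intro h0
    refine ⟨fun i => wordCoeff [i] (divRep u), (mem_trRel_iff _).mpr ⟨?_, fun v hv => ?_⟩⟩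
    · simp [divRep, algebraMapInv_gen]
    rcases List.eq_nil_or_singleton_or_cons_concat v with rfl | ⟨c, rfl⟩ | ⟨a, y, b, rfl⟩
    · contradiction
    · simp [cyclicCoeff_singleton, ← wordProd_singleton]
    · have hlen : 2 ≤ (a :: (y ++ [b])).length := by simp
      simp [cyclicCoeff_gen hlen, cyclicCoeff_divRep_eq_zero hu h h0 hlen]

end Divergence

end Ass

open Ass

/-- `ũ ∈ krv_n^0` iff `ρ(ũ)` commutes with `η_gr` and with `μ_gr`. -/
theorem statement17 (n : ℕ) (u : Fin n → Ass n) (hu : IsTDer u) :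
    IsKRV0 u ↔
      ((∀ a b : Ass n,
          rho u (etaGr n a b) = etaGr n (rho u a) b + etaGr n a (rho u b)) ∧
        (∀ a : Ass n, rho u (muGr n a) = muGr n (rho u a))) := by
  have hη : etaDefect u = 0 ↔ CoeffSymmetric u :=
    (etaDefect_eq_zero_iff_gen u).trans (etaDefect_gen_eq_zero_iff u)
  have hsder : IsSDer u ↔ CoeffSymmetric u := (and_iff_right hu).trans (rho_sum_gen_eq_zero_iff u)
  rw [IsKRV0, hsder, ← etaDefect_eq_zero_iff, hη]
  refine and_congr_right fun hs => ?_
  rw [exists_divergence_eq_iff hu hs, ← muGr_lie_gen_eq_zero_iff hs,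
    rho_muGr_comm_iff u (hη.mpr hs)]

end
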